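/- arXiv:math/0510340 — 4 statements merged into one kernel-verified Lean document; each statement's English description precedes it below -/
import Mathlib

section
/- Let X = ℝ with its usual metric and let L be the Lipschitz seminorm on C₀(ℝ). Let φ = Σ_{n=0}^∞ 2^{-n} δ_{2^{2n}} (a state on C₀(ℝ)). Then the Kantorovich distance κ_L(φ, δ₀) = sup{|φ(f) − δ₀(f)| : f ∈ C₀(ℝ), L(f) ≤ 1} is infinite. -/
open scoped ZeroAtInfty

noncomputable def tentFun (M : ℝ) : ℝ → ℝ := fun x => max 0 (min x (2*M - x))

lemma tent_lip (M : ℝ) : LipschitzWith 1 (tentFun M) := by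
  have h2 : LipschitzWith 1 (fun x : ℝ => 2*M - x) := by
    apply LipschitzWith.of_dist_le_mul
    intro x y
    rw [Real.dist_eq, Real.dist_eq, NNReal.coe_one, one_mul]
    have : (2*M - x) - (2*M - y) = -(x - y) := by ring
    rw [this, abs_neg]
  have h1 : LipschitzWith 1 (fun x : ℝ => min x (2*M - x)) := by
    simpa using LipschitzWith.min LipschitzWith.id h2
  exact h1.const_max 0

lemma tent_zero_at_infty (M : ℝ) :
    Filter.Tendsto (tentFun M) (Filter.cocompact ℝ) (nhds 0) := by
  apply Filter.Tendsto.congr' _ tendsto_const_nhds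
  filter_upwards [Filter.mem_cocompact.2 ⟨Set.Icc 0 (2*M), isCompact_Icc, subset_rfl⟩] with x hx
  simp only [Set.mem_compl_iff, Set.mem_Icc, not_and_or, not_le] at hx
  unfold tentFun
  rcases hx with h | h
  · rw [eq_comm, max_eq_left]
    exact le_trans (min_le_left _ _) h.le
  · rw [eq_comm, max_eq_left]
    exact le_trans (min_le_right _ _) (by linarith)

noncomputable def tent (M : ℝ) : C₀(ℝ, ℝ) :=
  ⟨⟨tentFun M, continuous_const.max (continuous_id.min (by continuity))⟩, tent_zero_at_infty M⟩

/-- On `C₀(ℝ)` with the Lipschitz seminorm, the Kantorovich distance between the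
state `φ = Σ_{n≥0} 2^{-n} δ_{2^{2n}}` and the Dirac state `δ₀` is infinite: the set of
values `|φ f − δ₀ f|` over 1-Lipschitz `f ∈ C₀(ℝ)` is not bounded above. -/
theorem kantorovich_distance_infinite :
    ¬ BddAbove {d : ℝ | ∃ f : C₀(ℝ, ℝ), LipschitzWith 1 ⇑f ∧
      d = |(∑' n : ℕ, (2 : ℝ)^(-(n : ℤ)) * f ((2 : ℝ)^(2 * n))) - f 0|} := by
  rintro ⟨b, hb⟩
  obtain ⟨N, hN⟩ := exists_nat_gt b
  set M : ℝ := (2:ℝ)^(2*N) with hM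
  have hMpos : (0:ℝ) < M := by positivity
  set f : C₀(ℝ, ℝ) := tent M with hf
  have hfx : ∀ x : ℝ, f x = max 0 (min x (2*M - x)) := fun x => rfl
  -- f is bounded by M
  have hfle : ∀ x : ℝ, f x ≤ M := by
    intro x
    rw [hfx]
    apply max_le hMpos.le
    rcases le_total x M with h | h
    · exact le_trans (min_le_left _ _) h
    · exact le_trans (min_le_right _ _) (by linarith)
  have hfnn : ∀ x : ℝ, 0 ≤ f x := fun x => by rw [hfx]; exact le_max_left _ _
  have hf0 : f 0 = 0 := by
    rw [hfx]
    rw [min_eq_left (by linarith), max_self]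
  set g : ℕ → ℝ := fun n => (2 : ℝ)^(-(n : ℤ)) * f ((2 : ℝ)^(2 * n)) with hg
  have hgnn : ∀ n, 0 ≤ g n := fun n => mul_nonneg (by positivity) (hfnn _)
  have hgle : ∀ n, g n ≤ (1/2:ℝ)^n * M := by
    intro n
    have : ((2:ℝ))^(-(n:ℤ)) = (1/2:ℝ)^n := by
      rw [zpow_neg, zpow_natCast]
      simp [inv_pow]
    rw [hg]
    simp only
    rw [this]
    exact mul_le_mul_of_nonneg_left (hfle _) (by positivity)
  have hsum : Summable g :=
    Summable.of_nonneg_of_le hgnn hgle ((summable_geometric_of_lt_one (by norm_num) (by norm_num)).mul_right M)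
  -- value of g n for n ≤ N
  have hgval : ∀ n ≤ N, g n = (2:ℝ)^n := by
    intro n hn
    have hx : (2:ℝ)^(2*n) ≤ M := by
      rw [hM]
      exact pow_le_pow_right₀ one_le_two (by omega)
    have hxnn : (0:ℝ) ≤ (2:ℝ)^(2*n) := by positivity
    have hfv : f ((2:ℝ)^(2*n)) = (2:ℝ)^(2*n) := by
      rw [hfx, min_eq_left (by linarith), max_eq_right hxnn]
    rw [hg]
    simp only
    rw [hfv, ← zpow_natCast (2:ℝ) (2*n), ← zpow_add₀ (by norm_num : (2:ℝ) ≠ 0)]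
    have : (-(n:ℤ) + (2*n : ℕ)) = (n:ℤ) := by push_cast; ring
    rw [this, zpow_natCast]
  -- partial sum lower bound
  have hpart : (N:ℝ) + 1 ≤ ∑ n ∈ Finset.range (N+1), g n := by
    have h1 : ∀ n ∈ Finset.range (N+1), (1:ℝ) ≤ g n := by
      intro n hn
      rw [hgval n (by simpa using Nat.lt_succ_iff.mp (Finset.mem_range.mp hn))]
      exact one_le_pow₀ one_le_two
    calc (N:ℝ) + 1 = ∑ n ∈ Finset.range (N+1), (1:ℝ) := by simp
    _ ≤ ∑ n ∈ Finset.range (N+1), g n := Finset.sum_le_sum h1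
  have htsum : (N:ℝ) + 1 ≤ ∑' n, g n :=
    le_trans hpart (Summable.sum_le_tsum _ (fun n _ => hgnn n) hsum)
  have hmem : |(∑' n : ℕ, (2 : ℝ)^(-(n : ℤ)) * f ((2 : ℝ)^(2 * n))) - f 0| ∈
      {d : ℝ | ∃ f : C₀(ℝ, ℝ), LipschitzWith 1 ⇑f ∧
      d = |(∑' n : ℕ, (2 : ℝ)^(-(n : ℤ)) * f ((2 : ℝ)^(2 * n))) - f 0|} :=
    ⟨f, tent_lip M, rfl⟩
  have hle := hb hmem
  rw [hf0, sub_zero, abs_of_nonneg (tsum_nonneg hgnn)] at hle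
  have : (∑' n, g n) ≤ b := hle
  linarith
end

section
/- On C₀(ℝ) with the usual Lipschitz seminorm L, the states φ_n = (1 − 1/n)δ₀ + (1/n)δ_n converge to δ₀ in the weak* topology, yet the Kantorovich distance satisfies κ_L(δ₀, φ_n) ≥ 1 for all n ≥ 1. Hence κ_L does not metrize the weak* topology on the state space of C₀(ℝ). -/
open scoped ZeroAtInfty
open Filter

noncomputable def kappaToDirac0 (μ : C₀(ℝ, ℝ) → ℝ) : ℝ :=
  sSup {d : ℝ | ∃ f : C₀(ℝ, ℝ), LipschitzWith 1 ⇑f ∧ d = |μ f - f 0|}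

noncomputable def tentFn (n : ℕ) : C₀(ℝ, ℝ) where
  toFun := fun x => max 0 ((n : ℝ) - |x|)
  continuous_toFun := by fun_prop
  zero_at_infty' := by
    have h : ∀ᶠ x : ℝ in cocompact ℝ, max 0 ((n : ℝ) - |x|) = 0 := by
      rw [Filter.eventually_iff, Filter.mem_cocompact]
      refine ⟨Metric.closedBall 0 n, isCompact_closedBall _ _, ?_⟩
      intro x hx
      simp only [Set.mem_compl_iff, Metric.mem_closedBall, Real.dist_eq, sub_zero, not_le] at hx
      have h0 : (n : ℝ) - |x| ≤ 0 := by linarith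
      simpa using max_eq_left h0
    exact Filter.Tendsto.congr' (h.mono fun x hx => hx.symm) tendsto_const_nhds

lemma tentFn_lip (n : ℕ) : LipschitzWith 1 ⇑(tentFn n) := by
  have h : LipschitzWith 1 (fun x : ℝ => (n : ℝ) - |x|) := by
    apply LipschitzWith.of_dist_le_mul
    intro x y
    have h1 : ((n : ℝ) - |x|) - ((n : ℝ) - |y|) = |y| - |x| := by ring
    rw [Real.dist_eq, Real.dist_eq, h1]
    push_cast
    rw [one_mul]
    calc |(|y| - |x|)| ≤ |y - x| := abs_abs_sub_abs_le_abs_sub y x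
      _ = |x - y| := abs_sub_comm y x
  exact h.const_max 0

lemma tentFn_zero (n : ℕ) : tentFn n 0 = n := by
  simp [tentFn]

lemma tentFn_n (n : ℕ) : tentFn n (n : ℝ) = 0 := by
  simp [tentFn, abs_of_nonneg (n.cast_nonneg : (0:ℝ) ≤ n)]

/-- On `C₀(ℝ)` with the usual Lipschitz seminorm, the states
`φ_n = (1 − 1/n) δ₀ + (1/n) δ_n` converge weak* to `δ₀`, yet
`κ_L(δ₀, φ_n) ≥ 1` for all `n ≥ 1`; in particular the Kantorovich distance
`κ_L(δ₀, φ_n)` does not tend to `0`, so `κ_L` does not metrize the weak* topology. -/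
theorem kantorovich_not_weakstar :
    (∀ f : C₀(ℝ, ℝ), Tendsto
        (fun n : ℕ => (1 - 1 / (n : ℝ)) * f 0 + (1 / (n : ℝ)) * f (n : ℝ))
        atTop (nhds (f 0))) ∧
    (∀ n : ℕ, 1 ≤ n →
      1 ≤ kappaToDirac0 (fun f => (1 - 1 / (n : ℝ)) * f 0 + (1 / (n : ℝ)) * f (n : ℝ))) ∧
    ¬ Tendsto (fun n : ℕ =>
        kappaToDirac0 (fun f => (1 - 1 / (n : ℝ)) * f 0 + (1 / (n : ℝ)) * f (n : ℝ)))
      atTop (nhds 0) := by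
  have hlow : ∀ n : ℕ, 1 ≤ n →
      1 ≤ kappaToDirac0 (fun f => (1 - 1 / (n : ℝ)) * f 0 + (1 / (n : ℝ)) * f (n : ℝ)) := by
    intro n hn
    have hn' : (1 : ℝ) ≤ n := by exact_mod_cast hn
    have hn0 : (n : ℝ) ≠ 0 := by positivity
    have hbdd : BddAbove {d : ℝ | ∃ f : C₀(ℝ, ℝ), LipschitzWith 1 ⇑f ∧
        d = |(1 - 1 / (n : ℝ)) * f 0 + (1 / (n : ℝ)) * f (n : ℝ) - f 0|} := by
      refine ⟨1, ?_⟩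
      rintro d ⟨f, hf, rfl⟩
      have hd : |f (n : ℝ) - f 0| ≤ n := by
        have := hf.dist_le_mul (n : ℝ) 0
        simpa [Real.dist_eq] using this
      have : (1 - 1 / (n : ℝ)) * f 0 + (1 / (n : ℝ)) * f (n : ℝ) - f 0
          = (1 / (n : ℝ)) * (f (n : ℝ) - f 0) := by ring
      rw [this, abs_mul]
      have h1 : |1 / (n : ℝ)| = 1 / (n : ℝ) := abs_of_pos (by positivity)
      rw [h1]
      calc (1 / (n : ℝ)) * |f (n:ℝ) - f 0| ≤ (1 / (n : ℝ)) * n := by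
            apply mul_le_mul_of_nonneg_left hd (by positivity)
        _ = 1 := by field_simp
    have hmem : (1 : ℝ) ∈ {d : ℝ | ∃ f : C₀(ℝ, ℝ), LipschitzWith 1 ⇑f ∧
        d = |(1 - 1 / (n : ℝ)) * f 0 + (1 / (n : ℝ)) * f (n : ℝ) - f 0|} := by
      refine ⟨tentFn n, tentFn_lip n, ?_⟩
      rw [tentFn_zero, tentFn_n]
      have : (1 - 1 / (n : ℝ)) * n + (1 / (n : ℝ)) * 0 - n = -1 := by field_simp; ring
      rw [this]; norm_num
    exact le_csSup hbdd hmem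
  refine ⟨?_, hlow, ?_⟩
  · intro f
    have h1 : Tendsto (fun n : ℕ => (1 : ℝ) - 1 / n) atTop (nhds 1) := by
      simpa using (tendsto_const_nhds (x := (1 : ℝ))).sub tendsto_one_div_atTop_nhds_zero_nat
    have h2 : Tendsto (fun n : ℕ => f (n : ℝ)) atTop (nhds 0) := by
      have hc : Tendsto (fun x : ℝ => f x) atTop (nhds 0) :=
        f.zero_at_infty'.mono_left (by rw [cocompact_eq_atBot_atTop]; exact le_sup_right)
      exact hc.comp tendsto_natCast_atTop_atTop
    have := (h1.mul (tendsto_const_nhds (x := f 0))).add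
      (tendsto_one_div_atTop_nhds_zero_nat.mul h2)
    simpa using this
  · intro h
    have h1 : ∀ᶠ n : ℕ in atTop, (kappaToDirac0
        (fun f => (1 - 1 / (n : ℝ)) * f 0 + (1 / (n : ℝ)) * f (n : ℝ))) < 1 :=
      h.eventually (Filter.Tendsto.eventually_lt_const (by norm_num) tendsto_id)
    have h2 : ∀ᶠ n : ℕ in atTop, 1 ≤ n := eventually_ge_atTop 1
    obtain ⟨n, hn1, hn2⟩ := (h1.and h2).exists
    exact absurd (hlow n hn2) (not_le.2 hn1)
end

section
/- Let A be a separable C*-algebra, L a densely defined seminorm on A^sa with B_L = {a : L(a) ≤ 1, ‖a‖ ≤ 1}, and d_L(φ,ψ) = sup{|φ(a)−ψ(a)| : a ∈ B_L}. If the d_L-topology equals the weak* topology on the state space S(A), then for every weak* compact subset K of S(A), the set B_L is totally bounded for the seminorm p_K(a) = sup_{φ∈K} |φ(a)|. -/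
open scoped ComplexOrder
open Filter

section

variable {A : Type*} [NonUnitalNormedRing A] [StarRing A] [CStarRing A]
  [NormedSpace ℂ A] [IsScalarTower ℂ A A] [SMulCommClass ℂ A A]

/-- A state on a (possibly nonunital) C*-algebra. -/
def IsState (φ : A →L[ℂ] ℂ) : Prop :=
  (∀ a : A, 0 ≤ φ (star a * a)) ∧ ‖φ‖ = 1

/-- A set of functionals is weak* compact iff its image under the (inducing) map to the
product topology of pointwise convergence is compact. -/
def IsWeakStarCompact (K : Set (A →L[ℂ] ℂ)) : Prop :=
  IsCompact ((fun φ : A →L[ℂ] ℂ => (φ : A → ℂ)) '' K)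

/-- The seminorm `p_K (a) = sup_{φ ∈ K} |φ(a)|`. -/
noncomputable def pSemi (K : Set (A →L[ℂ] ℂ)) (a : A) : ℝ :=
  ⨆ φ : K, ‖(φ : A →L[ℂ] ℂ) a‖

/-- The bounded-Lipschitz distance `d_L` associated to the seminorm `L` with
domain `D`. -/
noncomputable def dBL (D : Set A) (L : A → ℝ) (φ ψ : A →L[ℂ] ℂ) : ℝ :=
  sSup {r : ℝ | ∃ a ∈ D, L a ≤ 1 ∧ ‖a‖ ≤ 1 ∧ r = ‖φ a - ψ a‖}

end

section helpers

variable {A : Type*} [NonUnitalNormedRing A] [StarRing A] [CStarRing A]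
  [NormedSpace ℂ A] [IsScalarTower ℂ A A] [SMulCommClass ℂ A A]

lemma dBL_bddAbove (D : Set A) (L : A → ℝ) {φ ψ : A →L[ℂ] ℂ}
    (hφ : ‖φ‖ ≤ 1) (hψ : ‖ψ‖ ≤ 1) :
    BddAbove {r : ℝ | ∃ a ∈ D, L a ≤ 1 ∧ ‖a‖ ≤ 1 ∧ r = ‖φ a - ψ a‖} := by
  refine ⟨2, ?_⟩
  rintro r ⟨a, -, -, hna, rfl⟩
  have h1 : ‖φ a‖ ≤ ‖φ‖ * ‖a‖ := φ.le_opNorm a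
  have h2 : ‖ψ a‖ ≤ ‖ψ‖ * ‖a‖ := ψ.le_opNorm a
  have h3 : ‖φ a - ψ a‖ ≤ ‖φ a‖ + ‖ψ a‖ := norm_sub_le _ _
  have h4 : (0:ℝ) ≤ ‖a‖ := norm_nonneg a
  have h5 : (0:ℝ) ≤ ‖φ‖ := norm_nonneg φ
  have h6 : (0:ℝ) ≤ ‖ψ‖ := norm_nonneg ψ
  nlinarith

lemma le_dBL (D : Set A) (L : A → ℝ) {φ ψ : A →L[ℂ] ℂ}
    (hφ : ‖φ‖ ≤ 1) (hψ : ‖ψ‖ ≤ 1) {a : A} (haD : a ∈ D) (haL : L a ≤ 1)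
    (han : ‖a‖ ≤ 1) : ‖φ a - ψ a‖ ≤ dBL D L φ ψ :=
  le_csSup (dBL_bddAbove D L hφ hψ) ⟨a, haD, haL, han, rfl⟩

lemma dBL_nonneg (D : Set A) (L : A → ℝ) (φ ψ : A →L[ℂ] ℂ) :
    0 ≤ dBL D L φ ψ := by
  apply Real.sSup_nonneg
  rintro r ⟨a, -, -, -, rfl⟩
  exact norm_nonneg _

lemma dBL_comm (D : Set A) (L : A → ℝ) (φ ψ : A →L[ℂ] ℂ) :
    dBL D L φ ψ = dBL D L ψ φ := by
  unfold dBL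
  congr 1
  ext r
  constructor
  · rintro ⟨a, h1, h2, h3, rfl⟩; exact ⟨a, h1, h2, h3, (norm_sub_rev _ _)⟩
  · rintro ⟨a, h1, h2, h3, rfl⟩; exact ⟨a, h1, h2, h3, (norm_sub_rev _ _)⟩

lemma dBL_triangle (D : Set A) (L : A → ℝ) {φ χ ψ : A →L[ℂ] ℂ}
    (hφ : ‖φ‖ ≤ 1) (hχ : ‖χ‖ ≤ 1) (hψ : ‖ψ‖ ≤ 1) :
    dBL D L φ ψ ≤ dBL D L φ χ + dBL D L χ ψ := by
  apply Real.sSup_le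
  · rintro r ⟨a, h1, h2, h3, rfl⟩
    calc ‖φ a - ψ a‖ ≤ ‖φ a - χ a‖ + ‖χ a - ψ a‖ := norm_sub_le_norm_sub_add_norm_sub _ _ _
      _ ≤ dBL D L φ χ + dBL D L χ ψ :=
        add_le_add (le_dBL D L hφ hχ h1 h2 h3) (le_dBL D L hχ hψ h1 h2 h3)
  · exact add_nonneg (dBL_nonneg D L φ χ) (dBL_nonneg D L χ ψ)

/-- Sequential compactness of a weak* compact set of functionals, for separable `A`. -/
lemma weakStar_seqCompact [TopologicalSpace.SeparableSpace A]
    (K : Set (A →L[ℂ] ℂ)) (hK : IsWeakStarCompact K)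
    (χ : ℕ → A →L[ℂ] ℂ) (hχ : ∀ n, χ n ∈ K) :
    ∃ ψ ∈ K, ∃ g : ℕ → ℕ, StrictMono g ∧
      ∀ a : A, Tendsto (fun k => χ (g k) a) atTop (nhds (ψ a)) := by
  classical
  haveI : Nonempty A := ⟨0⟩
  obtain ⟨u, hu⟩ := TopologicalSpace.exists_dense_seq A
  set Kim : Set (A → ℂ) := (fun φ : A →L[ℂ] ℂ => (φ : A → ℂ)) '' K with hKim
  haveI : CompactSpace Kim := isCompact_iff_compactSpace.mp hK
  -- the evaluation map on a dense sequence is a continuous injection into `ℕ → ℂ`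
  set G : Kim → (ℕ → ℂ) := fun f => fun n => (f : A → ℂ) (u n) with hG
  have hGcont : Continuous G := by
    apply continuous_pi
    intro n
    exact (continuous_apply (u n)).comp continuous_subtype_val
  have hGinj : Function.Injective G := by
    intro x₁ x₂ hx
    obtain ⟨φ₁, -, hφ₁⟩ := x₁.2
    obtain ⟨φ₂, -, hφ₂⟩ := x₂.2
    have hφ₁' : (φ₁ : A → ℂ) = ↑x₁ := hφ₁
    have hφ₂' : (φ₂ : A → ℂ) = ↑x₂ := hφ₂
    apply Subtype.ext
    rw [← hφ₁', ← hφ₂']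
    apply Continuous.ext_on hu φ₁.continuous φ₂.continuous
    rintro z ⟨n, rfl⟩
    rw [hφ₁', hφ₂']
    exact congrFun hx n
  haveI : FirstCountableTopology Kim :=
    (hGcont.isClosedEmbedding hGinj).toIsEmbedding.firstCountableTopology
  -- extract a convergent subsequence
  set x : ℕ → Kim := fun n => ⟨(χ n : A → ℂ), ⟨χ n, hχ n, rfl⟩⟩ with hx
  obtain ⟨lim, -, g, hg, hconv⟩ :=
    isCompact_univ.tendsto_subseq (x := x) (fun n => Set.mem_univ _)
  obtain ⟨ψ, hψK, hψ⟩ := lim.2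
  refine ⟨ψ, hψK, g, hg, ?_⟩
  have hconv' : Tendsto (fun k => ((x (g k) : Kim) : A → ℂ)) atTop (nhds (lim : A → ℂ)) :=
    (continuous_subtype_val.tendsto lim).comp hconv
  intro a
  have := (tendsto_pi_nhds.mp hconv') a
  simpa [hx, hψ] using this

end helpers

/-- If the `d_L`-topology is the weak* topology on `S(A)`, then for every weak* compact
`K ⊆ S(A)`, the set `B_L = {a ∈ dom L : L a ≤ 1, ‖a‖ ≤ 1}` is totally bounded for the
seminorm `p_K`. -/
theorem BL_totallyBounded_of_dL_metrizes
    {A : Type*} [NonUnitalNormedRing A] [StarRing A] [CStarRing A]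
    [NormedSpace ℂ A] [IsScalarTower ℂ A A] [SMulCommClass ℂ A A]
    [CompleteSpace A] [TopologicalSpace.SeparableSpace A]
    (D : Set A) (L : A → ℝ)
    (hD_sa : ∀ a ∈ D, IsSelfAdjoint a)
    (hD_dense : ∀ a : A, IsSelfAdjoint a → a ∈ closure D)
    -- the `d_L`-topology equals the weak* topology on `S(A)`
    (hmetr : ∀ (φ : ℕ → A →L[ℂ] ℂ) (ψ : A →L[ℂ] ℂ),
      (∀ n, IsState (φ n)) → IsState ψ →
      ((∀ a : A, Tendsto (fun n => φ n a) atTop (nhds (ψ a))) ↔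
        Tendsto (fun n => dBL D L (φ n) ψ) atTop (nhds 0))) :
    ∀ K : Set (A →L[ℂ] ℂ), K ⊆ {φ | IsState φ} → IsWeakStarCompact K →
      ∀ ε > (0 : ℝ), ∃ F : Finset A, ∀ a ∈ D, L a ≤ 1 → ‖a‖ ≤ 1 →
        ∃ b ∈ F, pSemi K (a - b) ≤ ε := by
  classical
  intro K hKstate hKcompact ε hε
  have hnorm : ∀ φ ∈ K, ‖φ‖ ≤ 1 := fun φ hφ => le_of_eq (hKstate hφ).2
  -- Step 1 : K is totally bounded for dBL
  have hnet : ∃ T : Finset (A →L[ℂ] ℂ), (∀ ψ ∈ T, ψ ∈ K) ∧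
      ∀ φ ∈ K, ∃ ψ ∈ T, dBL D L φ ψ ≤ ε / 3 := by
    by_contra hcon
    push_neg at hcon
    -- choice function producing a point far from any given finite subset of K
    have hpick : ∀ T : Finset (A →L[ℂ] ℂ), ∃ φ,
        (∀ ψ ∈ T, ψ ∈ K) → (φ ∈ K ∧ ∀ ψ ∈ T, ε / 3 < dBL D L φ ψ) := by
      intro T
      by_cases hT : ∀ ψ ∈ T, ψ ∈ K
      · obtain ⟨φ, hφK, hfar⟩ := hcon T hT
        exact ⟨φ, fun _ => ⟨hφK, hfar⟩⟩
      · exact ⟨0, fun h => absurd h hT⟩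
    choose f hf using hpick
    -- build a sequence of pairwise (ε/3)-separated points of K
    let g : ℕ → Finset (A →L[ℂ] ℂ) := fun n => Nat.rec ∅ (fun _ T => insert (f T) T) n
    have hg0 : g 0 = ∅ := rfl
    have hgs : ∀ n, g (n + 1) = insert (f (g n)) (g n) := fun n => rfl
    have hgK : ∀ n, ∀ ψ ∈ g n, ψ ∈ K := by
      intro n
      induction n with
      | zero => simp [hg0]
      | succ n ih =>
        intro ψ hψ
        rw [hgs n, Finset.mem_insert] at hψ
        rcases hψ with rfl | hψ
        · exact ((hf (g n)) ih).1
        · exact ih ψ hψ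
    set χ : ℕ → A →L[ℂ] ℂ := fun n => f (g n) with hχdef
    have hχK : ∀ n, χ n ∈ K := fun n => ((hf (g n)) (hgK n)).1
    have hgmono : ∀ m n, m ≤ n → g m ⊆ g n := by
      have : Monotone g := monotone_nat_of_le_succ (fun n => by
        rw [hgs n]; exact Finset.subset_insert _ _)
      exact fun m n hmn => this hmn
    have hmem : ∀ m n, m < n → χ m ∈ g n := by
      intro m n hmn
      have : χ m ∈ g (m + 1) := by rw [hgs m]; exact Finset.mem_insert_self _ _
      exact hgmono (m + 1) n hmn this
    have hsep : ∀ m n, m < n → ε / 3 < dBL D L (χ n) (χ m) := by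
      intro m n hmn
      exact ((hf (g n)) (hgK n)).2 (χ m) (hmem m n hmn)
    -- extract a weak* convergent subsequence and contradict separation
    obtain ⟨ψ, hψK, s, hs, hconv⟩ := weakStar_seqCompact K hKcompact χ hχK
    have hstates : ∀ k, IsState (χ (s k)) := fun k => hKstate (hχK (s k))
    have hψstate : IsState ψ := hKstate hψK
    have hd0 : Tendsto (fun k => dBL D L (χ (s k)) ψ) atTop (nhds 0) :=
      (hmetr (fun k => χ (s k)) ψ hstates hψstate).mp hconv
    have hε6 : (0:ℝ) < ε / 6 := by linarith
    obtain ⟨N, hN⟩ := (Metric.tendsto_atTop.mp hd0) (ε / 6) hε6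
    have h1 : dBL D L (χ (s N)) ψ < ε / 6 := by
      have := hN N le_rfl
      rwa [Real.dist_eq, sub_zero, abs_of_nonneg (dBL_nonneg D L _ _)] at this
    have h2 : dBL D L (χ (s (N + 1))) ψ < ε / 6 := by
      have := hN (N + 1) (Nat.le_succ N)
      rwa [Real.dist_eq, sub_zero, abs_of_nonneg (dBL_nonneg D L _ _)] at this
    have hlt : s N < s (N + 1) := hs (Nat.lt_succ_self N)
    have hsep' := hsep (s N) (s (N + 1)) hlt
    have htri : dBL D L (χ (s (N + 1))) (χ (s N)) ≤
        dBL D L (χ (s (N + 1))) ψ + dBL D L ψ (χ (s N)) :=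
      dBL_triangle D L (hnorm _ (hχK _)) (le_of_eq hψstate.2) (hnorm _ (hχK _))
    rw [dBL_comm D L ψ (χ (s N))] at htri
    linarith
  obtain ⟨T, hTK, hTnet⟩ := hnet
  -- Step 2 : use the finite net to totally bound B_L for p_K
  -- the evaluation map into the finite-dimensional space `T → ℂ`
  set Φ : A → (T → ℂ) := fun a => fun i => (i : A →L[ℂ] ℂ) a with hΦ
  set B : Set A := {a | a ∈ D ∧ L a ≤ 1 ∧ ‖a‖ ≤ 1} with hB
  have himage : Φ '' B ⊆ Metric.closedBall 0 1 := by
    rintro _ ⟨a, ⟨-, -, han⟩, rfl⟩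
    rw [Metric.mem_closedBall]
    rw [dist_pi_le_iff zero_le_one]
    intro i
    simp only [Pi.zero_apply, dist_zero_right]
    calc ‖(i : A →L[ℂ] ℂ) a‖ ≤ ‖(i : A →L[ℂ] ℂ)‖ * ‖a‖ := ContinuousLinearMap.le_opNorm _ _
      _ ≤ 1 * 1 := by
        apply mul_le_mul (hnorm _ (hTK _ i.2)) han (norm_nonneg a)
        exact zero_le_one
      _ = 1 := mul_one 1
  have htb : TotallyBounded (Φ '' B) :=
    (isCompact_closedBall (0 : T → ℂ) 1).totallyBounded.subset himage
  have hε3 : (0:ℝ) < ε / 3 := by linarith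
  obtain ⟨t, hts, htfin, htcov⟩ := totallyBounded_iff_subset.mp htb
    {p : (T → ℂ) × (T → ℂ) | dist p.1 p.2 < ε / 3} (Metric.dist_mem_uniformity hε3)
  -- choose preimages in B of the centers
  set pick : (T → ℂ) → A := fun y => if h : ∃ b, b ∈ B ∧ Φ b = y then h.choose else 0
    with hpickdef
  refine ⟨htfin.toFinset.image pick, ?_⟩
  intro a haD haL han
  have haB : a ∈ B := ⟨haD, haL, han⟩
  have : Φ a ∈ ⋃ y ∈ t, {x | (x, y) ∈ {p : (T → ℂ) × (T → ℂ) | dist p.1 p.2 < ε / 3}} :=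
    htcov ⟨a, haB, rfl⟩
  simp only [Set.mem_iUnion, Set.mem_setOf_eq] at this
  obtain ⟨y, hyt, hdist⟩ := this
  have hy : ∃ b, b ∈ B ∧ Φ b = y := by
    obtain ⟨b, hbB, hby⟩ := hts hyt
    exact ⟨b, hbB, hby⟩
  set b : A := pick y with hbdef
  have hbspec : b ∈ B ∧ Φ b = y := by
    rw [hbdef, hpickdef]
    simp only [dif_pos hy]
    exact hy.choose_spec
  refine ⟨b, Finset.mem_image_of_mem pick (htfin.mem_toFinset.mpr hyt), ?_⟩
  -- now estimate p_K (a - b)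
  apply Real.iSup_le _ (le_of_lt hε)
  rintro ⟨φ, hφK⟩
  obtain ⟨ψi, hψiT, hψnet⟩ := hTnet φ hφK
  set i : {x // x ∈ T} := ⟨ψi, hψiT⟩ with hi
  have hφn : ‖φ‖ ≤ 1 := hnorm φ hφK
  have hψin : ‖ψi‖ ≤ 1 := hnorm ψi (hTK ψi hψiT)
  have hA1 : ‖φ a - ψi a‖ ≤ ε / 3 :=
    le_trans (le_dBL D L hφn hψin haD haL han) hψnet
  have hA3 : ‖ψi b - φ b‖ ≤ ε / 3 := by
    rw [norm_sub_rev]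
    exact le_trans (le_dBL D L hφn hψin hbspec.1.1 hbspec.1.2.1 hbspec.1.2.2) hψnet
  have hA2 : ‖ψi a - ψi b‖ ≤ ε / 3 := by
    calc ‖ψi a - ψi b‖ = dist (Φ a i) (Φ b i) := by rw [dist_eq_norm]
      _ ≤ dist (Φ a) (Φ b) := dist_le_pi_dist _ _ i
      _ = dist (Φ a) y := by rw [hbspec.2]
      _ ≤ ε / 3 := le_of_lt hdist
  have key : ‖φ (a - b)‖ ≤ ε := by
    rw [map_sub]
    calc ‖φ a - φ b‖ = ‖(φ a - ψi a) + ((ψi a - ψi b) + (ψi b - φ b))‖ := by ring_nf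
      _ ≤ ‖φ a - ψi a‖ + ‖(ψi a - ψi b) + (ψi b - φ b)‖ := norm_add_le _ _
      _ ≤ ‖φ a - ψi a‖ + (‖ψi a - ψi b‖ + ‖ψi b - φ b‖) :=
        add_le_add (le_refl _) (norm_add_le _ _)
      _ ≤ ε / 3 + (ε / 3 + ε / 3) := by
        exact add_le_add hA1 (add_le_add hA2 hA3)
      _ = ε := by ring
  exact key
end

section
/- Let A be a separable C*-algebra and K a weak* compact subset of its state space. If (e_n) is an increasing Abelian approximate unit of positive elements of norm at most 1, then for every positive integer α, sup_{φ∈K} φ((1−e_n)^α) → 0 as n → ∞, where 1 denotes the unit of the enveloping von Neumann algebra A''. -/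
open scoped ComplexOrder
open Filter

section

variable {A : Type*} [NonUnitalNormedRing A] [StarRing A] [CStarRing A]
  [NormedSpace ℂ A] [IsScalarTower ℂ A A] [SMulCommClass ℂ A A]

/-- The canonical extension of a state `φ` of `A` to the unitization `A + ℂ1`, sending
`a + λ·1` to `φ a + λ`; it agrees with the normal extension of `φ` to the enveloping
von Neumann algebra `A''` on elements of the form `(1 - e)^α` with `e ∈ A`. -/
noncomputable def stateExt (φ : A →L[ℂ] ℂ) (x : Unitization ℂ A) : ℂ :=
  x.fst + φ x.snd

end


open Complex

section AuxStarModule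
set_option linter.unusedSectionVars false
set_option maxHeartbeats 1000000
variable {A : Type*} [NonUnitalNormedRing A] [StarRing A] [CStarRing A]
  [NormedSpace ℂ A] [IsScalarTower ℂ A A] [SMulCommClass ℂ A A]

theorem star_real_smul' (r : ℝ) (x : A) : star ((r : ℂ) • x) = (r : ℂ) • star x := by
  have hq : ∀ q : ℚ, star (((q:ℝ) : ℂ) • x) = ((q:ℝ) : ℂ) • star x := by
    intro q
    have := map_ratCast_smul (starAddEquiv : A ≃+ A) ℂ ℂ q x
    simpa using this
  have hcont1 : Continuous fun r : ℝ => star ((r : ℂ) • x) :=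
    continuous_star.comp (Complex.continuous_ofReal.smul continuous_const)
  have hcont2 : Continuous fun r : ℝ => (r : ℂ) • star x :=
    Complex.continuous_ofReal.smul continuous_const
  have := Continuous.ext_on (Rat.denseRange_cast (𝕜 := ℝ)) hcont1 hcont2 ?_
  · exact congrFun this r
  · rintro - ⟨q, rfl⟩
    exact hq q

theorem starModule_of_approx_unit [PartialOrder A] [StarOrderedRing A]
    (e : ℕ → A) (he_pos : ∀ n, 0 ≤ e n)
    (he_right : ∀ a : A, Tendsto (fun n => ‖a * e n - a‖) atTop (nhds 0)) :
    StarModule ℂ A := by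
  have hconv : ∀ a : A, Tendsto (fun n => a * e n) atTop (nhds a) := fun a =>
    (tendsto_iff_norm_sub_tendsto_zero).2 (he_right a)
  set J : A → A := fun x => star (I • star x) with hJ
  have J_add : ∀ x y, J (x + y) = J x + J y := by
    intro x y; simp [hJ, star_add, smul_add]
  have J_mul_right : ∀ x y, J (x * y) = x * J y := by
    intro x y
    simp only [hJ]
    rw [star_mul, ← smul_mul_assoc, star_mul, star_star]
  have J_mul_left : ∀ x y, J (x * y) = J x * y := by
    intro x y
    simp only [hJ]
    rw [star_mul, ← mul_smul_comm, star_mul, star_star]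
  have J_cont : Continuous J :=
    continuous_star.comp ((continuous_const.smul continuous_star))
  have J_smul_I : ∀ x, J (I • x) = I • J x := by
    intro x
    have h1 : Tendsto (fun n => J ((I • x) * e n)) atTop (nhds (J (I • x))) :=
      (J_cont.tendsto _).comp (hconv (I • x))
    have h2 : ∀ n, J ((I • x) * e n) = I • J (x * e n) := by
      intro n
      rw [J_mul_right (I • x) (e n), smul_mul_assoc, ← J_mul_right]
    have h3 : Tendsto (fun n => I • J (x * e n)) atTop (nhds (I • J x)) :=
      ((J_cont.tendsto _).comp (hconv x)).const_smul I
    rw [funext h2] at h1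
    exact tendsto_nhds_unique h1 h3
  have J_J : ∀ x, J (J x) = -x := by
    intro x
    show star (I • star (star (I • star x))) = -x
    rw [star_star, smul_smul, Complex.I_mul_I, neg_one_smul, star_neg, star_star]
  set Q : A → A := fun x => I • J x with hQ
  have Q_add : ∀ x y, Q (x + y) = Q x + Q y := by
    intro x y; simp only [hQ, J_add, smul_add]
  have Q_sq : ∀ x, Q (Q x) = x := by
    intro x
    show I • J (I • J x) = x
    rw [J_smul_I, smul_smul, Complex.I_mul_I, neg_one_smul, J_J, neg_neg]
  have Q_mul_left : ∀ x y, Q (x * y) = Q x * y := by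
    intro x y; show I • J (x * y) = (I • J x) * y
    rw [J_mul_left, smul_mul_assoc]
  have Q_mul_right : ∀ x y, Q (x * y) = x * Q y := by
    intro x y; show I • J (x * y) = x * (I • J y)
    rw [J_mul_right, mul_smul_comm]
  have Q_gen : ∀ s : A, 0 ≤ Q (star s * s) := by
    intro s
    have h1 : star (J s) * J s = Q (star s * s) := by
      have h2 : star (J s) = I • star s := by
        show star (star (I • star s)) = I • star s
        rw [star_star]
      rw [h2, smul_mul_assoc, ← J_mul_right]
    exact h1 ▸ star_mul_self_nonneg (J s)
  have Q_nonneg : ∀ p : A, 0 ≤ p → 0 ≤ Q p := by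
    intro p hp
    rw [StarOrderedRing.nonneg_iff] at hp
    induction hp using AddSubmonoid.closure_induction with
    | mem x hx => obtain ⟨s, rfl⟩ := hx; exact Q_gen s
    | zero => show (0:A) ≤ Q 0; have : Q 0 = 0 := by simp [hQ, hJ]
              rw [this]
    | add x y _ _ hx hy => rw [Q_add]; exact add_nonneg hx hy
  have Q_fix : ∀ p : A, 0 ≤ p → Q p = p := by
    intro p hp
    have hps : star p = p := (IsSelfAdjoint.of_nonneg hp)
    have hQs : star (Q p) = Q p := (IsSelfAdjoint.of_nonneg (Q_nonneg p hp))
    set c := p - Q p with hc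
    have hcs : star c = c := by rw [hc, star_sub, hps, hQs]
    have Q_zero : Q 0 = 0 := by simp [hQ, hJ]
    have Q_sub : ∀ x y : A, Q (x - y) = Q x - Q y := by
      intro x y; simp [hQ, hJ, star_sub, smul_sub]
    have hQpp : Q (p * p) = p * Q p := Q_mul_right p p
    have hQQ : Q p * Q p = p * p := by
      have h1 : Q p * Q p = Q (p * Q p) := (Q_mul_left p (Q p)).symm
      rw [h1, ← hQpp, Q_sq]
    set d := p * p - Q (p * p) with hd
    have hcc : c * c = d + d := by
      rw [hc, hd, sub_mul, mul_sub, mul_sub, hQQ, ← Q_mul_right, ← Q_mul_left]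
      abel
    have hw : 0 ≤ d + d := by
      have h2 : 0 ≤ star c * c := star_mul_self_nonneg c
      rw [hcs, hcc] at h2
      exact h2
    have hQd : Q d = -d := by
      rw [hd, Q_sub, Q_sq]
      abel
    have hQw : Q (d + d) = -(d + d) := by rw [Q_add, hQd]; abel
    have hw0 : d + d = 0 := by
      have h2 := Q_nonneg _ hw
      rw [hQw] at h2
      exact le_antisymm (neg_nonneg.mp h2) hw
    have hcc0 : c * c = 0 := by rw [hcc, hw0]
    have hc0 : c = 0 := by
      have hn : ‖c‖ * ‖c‖ = 0 := by
        rw [← CStarRing.norm_star_mul_self (x := c), hcs, hcc0, norm_zero]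
      simpa using norm_eq_zero.mp (mul_self_eq_zero.mp hn)
    have h := sub_eq_zero.mp hc0
    exact h.symm
  have Q_id : ∀ x : A, Q x = x := by
    intro x
    have h1 : Tendsto (fun n => Q (x * e n)) atTop (nhds (Q x)) := by
      have Q_cont : Continuous Q := continuous_const.smul J_cont
      exact (Q_cont.tendsto _).comp (hconv x)
    have h2 : ∀ n, Q (x * e n) = x * e n := by
      intro n
      rw [Q_mul_right, Q_fix (e n) (he_pos n)]
    rw [funext h2] at h1
    exact tendsto_nhds_unique h1 (hconv x)
  have J_eq : ∀ x : A, J x = -I • x := by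
    intro x
    have h1 : I • J x = x := Q_id x
    have : (-I) • (I • J x) = (-I) • x := by rw [h1]
    rwa [smul_smul, neg_mul, Complex.I_mul_I, neg_neg, one_smul] at this
  have star_I_smul : ∀ x : A, star (I • x) = -I • star x := by
    intro x
    have : J (star x) = star (I • x) := by
      show star (I • star (star x)) = star (I • x)
      rw [star_star]
    rw [← this, J_eq]
  refine ⟨fun c x => ?_⟩
  have hdec : c • x = (c.re : ℂ) • x + (c.im : ℂ) • (I • x) := by
    rw [smul_smul, ← add_smul, Complex.re_add_im]
  have hscal : (c.re : ℂ) + (c.im : ℂ) * (-I) = star c := by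
    rw [Complex.star_def]
    apply Complex.ext <;> simp
  rw [hdec, star_add, star_real_smul', star_real_smul', star_I_smul, smul_smul, ← add_smul,
    hscal]

end AuxStarModule

section AuxState
set_option linter.unusedSectionVars false
set_option maxHeartbeats 1000000
variable {A : Type*} [NonUnitalNormedRing A] [StarRing A] [CStarRing A]
  [NormedSpace ℂ A] [IsScalarTower ℂ A A] [SMulCommClass ℂ A A] [StarModule ℂ A]

theorem posMono' {R : Type*} [NonUnitalRing R] [PartialOrder R] [StarRing R] [StarOrderedRing R]
    (f : R →+ ℂ) (hf : ∀ s, 0 ≤ f (star s * s)) {a b : R} (h : a ≤ b) : f a ≤ f b := by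
  obtain ⟨p, hp, rfl⟩ := (StarOrderedRing.le_iff a b).mp h
  rw [map_add]
  clear h
  have hp0 : 0 ≤ f p := by
    induction hp using AddSubmonoid.closure_induction with
    | mem x hx => obtain ⟨s, rfl⟩ := hx; exact hf s
    | zero => simp
    | add x y _ _ hx hy => rw [map_add]; exact add_nonneg hx hy
  exact le_add_of_nonneg_right hp0

theorem herm' (φ : A →L[ℂ] ℂ) (hp : ∀ a : A, 0 ≤ φ (star a * a)) (a b : A) :
    φ (star a * b) = starRingEnd ℂ (φ (star b * a)) := by
  have h1 : 0 ≤ φ (star (a + b) * (a + b)) := hp _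
  have h2 : 0 ≤ φ (star (a + I • b) * (a + I • b)) := hp _
  have e1 : star (a + b) * (a + b) = star a * a + (star a * b + star b * a) + star b * b := by
    rw [star_add, add_mul, mul_add, mul_add]; abel
  have e2 : star (a + I • b) * (a + I • b)
      = star a * a + (I • (star a * b) - I • (star b * a)) + star b * b := by
    simp only [star_add, star_smul, Complex.star_def, Complex.conj_I, add_mul, mul_add,
      neg_smul, neg_mul, smul_mul_assoc, mul_smul_comm, smul_smul, Complex.I_mul_I,
      neg_one_smul, neg_neg, smul_add]
    match_scalars <;> simp [pow_two, Complex.I_mul_I]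
  rw [e1] at h1
  rw [e2] at h2
  have ha := hp a
  have hb := hp b
  rw [Complex.nonneg_iff] at h1 h2 ha hb
  simp only [map_add, map_sub, map_smul, smul_eq_mul, Complex.add_im, Complex.sub_im,
    Complex.mul_im, Complex.I_re, Complex.I_im] at h1 h2
  apply Complex.ext
  · have := h2.2
    simp only [← ha.2, ← hb.2] at this
    simp only [Complex.conj_re]
    nlinarith [this]
  · have := h1.2
    simp only [← ha.2, ← hb.2] at this
    simp only [Complex.conj_im]
    nlinarith [this]

theorem cs' (φ : A →L[ℂ] ℂ) (hp : ∀ a : A, 0 ≤ φ (star a * a)) (a b : A) :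
    normSq (φ (star b * a)) ≤ (φ (star b * b)).re * (φ (star a * a)).re := by
  set v := φ (star b * a) with hv
  set p := (φ (star a * a)).re with hpre
  set q := (φ (star b * b)).re with hqre
  have hpa := hp a
  have hpb := hp b
  have hp0 : 0 ≤ p := ((Complex.nonneg_iff).mp hpa).1
  have hq0 : 0 ≤ q := ((Complex.nonneg_iff).mp hpb).1
  have hA : φ (star a * a) = (p : ℂ) := by
    apply Complex.ext <;> simp [hpre, ((Complex.nonneg_iff).mp hpa).2.symm]
  have hB : φ (star b * b) = (q : ℂ) := by
    apply Complex.ext <;> simp [hqre, ((Complex.nonneg_iff).mp hpb).2.symm]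
  have hu : φ (star a * b) = starRingEnd ℂ v := herm' φ hp a b
  have quad : ∀ t : ℝ, 0 ≤ (normSq v * q) * (t * t) + (-(2 * normSq v)) * t + p := by
    intro t
    set z : ℂ := (t : ℂ) * v with hz
    have hy : star (a - z • b) * (a - z • b)
        = star a * a - z • (star a * b) - (starRingEnd ℂ z) • (star b * a)
          + (starRingEnd ℂ z * z) • (star b * b) := by
      simp only [star_sub, star_smul, Complex.star_def, sub_mul, mul_sub,
        smul_mul_assoc, mul_smul_comm, smul_smul, smul_add, smul_sub]
      module
    have h0 := hp (a - z • b)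
    rw [hy, map_add, map_sub, map_sub, map_smul, map_smul, map_smul, hu, hA, hB] at h0
    simp only [smul_eq_mul] at h0
    have hzz : (p:ℂ) - z * (starRingEnd ℂ) v - (starRingEnd ℂ) z * v + (starRingEnd ℂ) z * z * (q:ℂ)
        = (((normSq v * q) * (t * t) + (-(2 * normSq v)) * t + p : ℝ) : ℂ) := by
      rw [hz]
      simp only [map_mul, Complex.conj_ofReal]
      push_cast
      linear_combination ((t:ℂ) * (t:ℂ) * (q:ℂ) - 2 * (t:ℂ)) * Complex.mul_conj v
    rw [hzz] at h0
    have hre := (Complex.nonneg_iff.mp h0).1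
    simpa using hre
  have hd := discrim_le_zero quad
  rw [discrim] at hd
  rcases eq_or_lt_of_le (normSq_nonneg v) with h | h
  · rw [← h]
    exact mul_nonneg hq0 hp0
  · nlinarith [h, hd]

end AuxState

set_option maxHeartbeats 2000000 in
theorem main_aux
    {A : Type*} [NonUnitalNormedRing A] [StarRing A] [CStarRing A]
    [NormedSpace ℂ A] [IsScalarTower ℂ A A] [SMulCommClass ℂ A A]
    [PartialOrder A] [StarOrderedRing A]
    [CompleteSpace A] [StarModule ℂ A]
    (e : ℕ → A)
    (he_pos : ∀ n, 0 ≤ e n)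
    (he_mono : Monotone e)
    (he_norm : ∀ n, ‖e n‖ ≤ 1)
    (he_left : ∀ a : A, Tendsto (fun n => ‖e n * a - a‖) atTop (nhds 0))
    (he_right : ∀ a : A, Tendsto (fun n => ‖a * e n - a‖) atTop (nhds 0))
    (K : Set (A →L[ℂ] ℂ)) (hK_states : K ⊆ {φ | IsState φ})
    (hK : IsWeakStarCompact K) :
    ∀ α : ℕ, 1 ≤ α →
      Tendsto (fun n => ⨆ φ : K,
          ‖stateExt (φ : A →L[ℂ] ℂ) ((1 - (e n : Unitization ℂ A)) ^ α)‖)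
        atTop (nhds 0) := by
  letI : NonUnitalCStarAlgebra A := { }
  intro α hα
  have hconvL : ∀ a : A, Tendsto (fun n => e n * a) atTop (nhds a) := fun a =>
    tendsto_iff_norm_sub_tendsto_zero.2 (he_left a)
  have hconvR : ∀ a : A, Tendsto (fun n => a * e n) atTop (nhds a) := fun a =>
    tendsto_iff_norm_sub_tendsto_zero.2 (he_right a)
  have hsa : ∀ n, star (e n) = e n := fun n => IsSelfAdjoint.of_nonneg (he_pos n)
  -- basic facts for states
  have hφle : ∀ φ : A →L[ℂ] ℂ, φ ∈ K → ∀ x : A, ‖φ x‖ ≤ ‖x‖ := by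
    intro φ hφ x
    have := φ.le_opNorm x
    rwa [(hK_states hφ).2, one_mul] at this
  have hφaddsq : ∀ (φ : A →L[ℂ] ℂ),
      (∀ s : A, 0 ≤ (AddMonoidHom.mk' (fun x => φ x) (map_add φ)) (star s * s)) →
      True := fun _ _ => trivial
  -- conjugation
  have hconj : ∀ φ : A →L[ℂ] ℂ, φ ∈ K → ∀ a : A, φ (star a) = starRingEnd ℂ (φ a) := by
    intro φ hφ a
    have hpos := (hK_states hφ).1
    have l1 : Tendsto (fun n => φ (star a * e n)) atTop (nhds (φ (star a))) :=
      (φ.continuous.tendsto _).comp (hconvR (star a))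
    have l2 : ∀ n, φ (star a * e n) = starRingEnd ℂ (φ (e n * a)) := by
      intro n
      have := herm' φ hpos a (e n)
      rwa [hsa n] at this
    have l3 : Tendsto (fun n => starRingEnd ℂ (φ (e n * a))) atTop
        (nhds (starRingEnd ℂ (φ a))) :=
      ((Complex.continuous_conj.tendsto _).comp ((φ.continuous.tendsto _).comp (hconvL a)))
    rw [funext l2] at l1
    exact tendsto_nhds_unique l1 l3
  -- key inequality, parametrized
  have hkey : ∀ φ : A →L[ℂ] ℂ, φ ∈ K → ∀ L : ℝ,
      (∀ n, (φ (e n * e n)).re ≤ L) → ∀ x : A,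
      normSq (φ x) ≤ L * (φ (star x * x)).re := by
    intro φ hφ L hL x
    have hpos := (hK_states hφ).1
    have hp0 : 0 ≤ (φ (star x * x)).re := (Complex.nonneg_iff.mp (hpos x)).1
    have bound : ∀ n, normSq (φ (e n * x)) ≤ L * (φ (star x * x)).re := by
      intro n
      have h1 := cs' φ hpos x (e n)
      rw [hsa n] at h1
      calc normSq (φ (e n * x)) ≤ (φ (e n * e n)).re * (φ (star x * x)).re := h1
        _ ≤ L * (φ (star x * x)).re := mul_le_mul_of_nonneg_right (hL n) hp0
    have l1 : Tendsto (fun n => normSq (φ (e n * x))) atTop (nhds (normSq (φ x))) :=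
      (Complex.continuous_normSq.tendsto _).comp ((φ.continuous.tendsto _).comp (hconvL x))
    exact le_of_tendsto l1 (Eventually.of_forall bound)
  have hsq_le_one : ∀ φ : A →L[ℂ] ℂ, φ ∈ K → ∀ n, (φ (e n * e n)).re ≤ 1 := by
    intro φ hφ n
    calc (φ (e n * e n)).re ≤ ‖φ (e n * e n)‖ := Complex.re_le_norm _
      _ = ‖φ (e n * e n)‖ := rfl
      _ ≤ ‖e n * e n‖ := hφle φ hφ _
      _ ≤ ‖e n‖ * ‖e n‖ := norm_mul_le _ _
      _ ≤ 1 * 1 := by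
          have := he_norm n
          exact mul_le_mul this this (norm_nonneg _) zero_le_one
      _ = 1 := one_mul 1
  have hkey1 : ∀ φ : A →L[ℂ] ℂ, φ ∈ K → ∀ x : A,
      normSq (φ x) ≤ (φ (star x * x)).re := by
    intro φ hφ x
    simpa using hkey φ hφ 1 (hsq_le_one φ hφ) x
  -- the extension is positive
  have hψpos : ∀ φ : A →L[ℂ] ℂ, φ ∈ K → ∀ x : Unitization ℂ A,
      0 ≤ stateExt φ (star x * x) := by
    intro φ hφ x
    have hpos := (hK_states hφ).1
    set z := x.fst with hzd
    set a := x.snd with had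
    have hcomp : stateExt φ (star x * x)
        = starRingEnd ℂ z * z + (starRingEnd ℂ z * φ a + starRingEnd ℂ (starRingEnd ℂ z * φ a))
          + φ (star a * a) := by
      simp only [stateExt, Unitization.fst_mul, Unitization.snd_mul, Unitization.fst_star,
        Unitization.snd_star, map_add, map_smul, smul_eq_mul, Complex.star_def, map_mul,
        Complex.conj_conj, ← hzd, ← had, hconj φ hφ a]
      ring
    set P := (φ (star a * a)).re with hPd
    have hPc : φ (star a * a) = (P : ℂ) := by
      apply Complex.ext
      · simp [hPd]
      · simp [hPd, (Complex.nonneg_iff.mp (hpos a)).2.symm]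
    have hP2 : normSq (φ a) ≤ P := hkey1 φ hφ a
    rw [hcomp, show (starRingEnd ℂ) z * z = ((normSq z : ℝ) : ℂ) from by
      rw [mul_comm, Complex.mul_conj], Complex.add_conj, hPc]
    have : ((normSq z : ℝ) : ℂ) + ((2 * (starRingEnd ℂ z * φ a).re : ℝ) : ℂ) + ((P:ℝ):ℂ)
        = (((normSq z + 2 * (starRingEnd ℂ z * φ a).re + P : ℝ)) : ℂ) := by push_cast; ring
    rw [this]
    rw [Complex.nonneg_iff]
    constructor
    · simp only [Complex.ofReal_re]
      have h1 : |(starRingEnd ℂ z * φ a).re| ≤ ‖z‖ * ‖φ a‖ := by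
        calc |(starRingEnd ℂ z * φ a).re| ≤ ‖starRingEnd ℂ z * φ a‖ :=
              Complex.abs_re_le_norm _
          _ = ‖z‖ * ‖φ a‖ := by rw [norm_mul, Complex.norm_conj]
      have h2 : ‖φ a‖ ^ 2 = normSq (φ a) := Complex.sq_norm _
      have h3 : ‖z‖ ^ 2 = normSq z := Complex.sq_norm _
      nlinarith [neg_abs_le ((starRingEnd ℂ z * φ a).re), sq_nonneg (‖z‖ - ‖φ a‖), hP2, h1, h2, h3]
    · simp
  -- additive homs
  have hψadd : ∀ φ : A →L[ℂ] ℂ, ∀ x y : Unitization ℂ A,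
      stateExt φ (x + y) = stateExt φ x + stateExt φ y := by
    intro φ x y
    simp only [stateExt, Unitization.fst_add, Unitization.snd_add, map_add]
    ring
  -- monotonicity of φ and of stateExt φ
  have hφmono : ∀ φ : A →L[ℂ] ℂ, φ ∈ K → ∀ {a b : A}, a ≤ b → φ a ≤ φ b := by
    intro φ hφ a b hab
    exact posMono' (AddMonoidHom.mk' (fun x => φ x) (map_add φ)) (hK_states hφ).1 hab
  have hψmono : ∀ φ : A →L[ℂ] ℂ, φ ∈ K → ∀ {x y : Unitization ℂ A}, x ≤ y →
      stateExt φ x ≤ stateExt φ y := by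
    intro φ hφ x y hxy
    exact posMono' (AddMonoidHom.mk' (stateExt φ) (hψadd φ)) (hψpos φ hφ) hxy
  have hψzero : ∀ φ : A →L[ℂ] ℂ, stateExt φ 0 = 0 := by
    intro φ; simp [stateExt]
  -- facts about 1 - e n in the unitization
  have hIcc : ∀ n, (0:Unitization ℂ A) ≤ (e n : Unitization ℂ A) ∧
      ((e n : Unitization ℂ A)) ≤ 1 := by
    intro n
    have := (CStarAlgebra.inr_mem_Icc_iff_norm_le (A := A) (x := e n)).mpr ⟨he_pos n, he_norm n⟩
    exact ⟨this.1, this.2⟩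
  -- the crucial estimate
  have est : ∀ n, ∀ φ : A →L[ℂ] ℂ, φ ∈ K →
      ‖stateExt φ ((1 - (e n : Unitization ℂ A)) ^ α)‖ ≤ 1 - (φ (e n)).re := by
    intro n φ hφ
    set x : Unitization ℂ A := 1 - (e n : Unitization ℂ A) with hx
    have h1 : 0 ≤ x := sub_nonneg.mpr (hIcc n).2
    have h2 : x ≤ 1 := sub_le_self 1 (hIcc n).1
    have hpowle : x ^ α ≤ x := by
      have := CStarAlgebra.pow_antitone h1 h2 hα
      simpa using this
    have hpow0 : (0:Unitization ℂ A) ≤ x ^ α := CStarAlgebra.pow_nonneg h1 α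
    have hv0 : 0 ≤ stateExt φ (x ^ α) := by
      have := hψmono φ hφ hpow0
      rwa [hψzero φ] at this
    have hv1 : stateExt φ (x ^ α) ≤ stateExt φ x := hψmono φ hφ hpowle
    have hψx : stateExt φ x = 1 - φ (e n) := by
      simp only [stateExt, hx, sub_eq_add_neg, Unitization.fst_add, Unitization.fst_neg,
        Unitization.snd_add, Unitization.snd_neg, Unitization.fst_one, Unitization.snd_one,
        Unitization.fst_inr, Unitization.snd_inr, map_add, map_neg, map_zero]
      ring
    have him : (stateExt φ (x ^ α)).im = 0 := (Complex.nonneg_iff.mp hv0).2.symm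
    have hre0 : 0 ≤ (stateExt φ (x ^ α)).re := (Complex.nonneg_iff.mp hv0).1
    have hrele : (stateExt φ (x ^ α)).re ≤ 1 - (φ (e n)).re := by
      have := (Complex.le_def.mp hv1).1
      rwa [hψx] at this
      -- fix re of 1 - φ(e n)
    calc ‖stateExt φ (x ^ α)‖ = |(stateExt φ (x ^ α)).re| := by
          rw [show stateExt φ (x ^ α) = ((stateExt φ (x ^ α)).re : ℂ) from
            Complex.ext rfl (by simp [him])]
          simp
      _ = (stateExt φ (x ^ α)).re := abs_of_nonneg hre0
      _ ≤ 1 - (φ (e n)).re := hrele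
  -- monotonicity in n
  have hrmono : ∀ φ : A →L[ℂ] ℂ, φ ∈ K → Monotone (fun n => (φ (e n)).re) := by
    intro φ hφ m n hmn
    exact (Complex.le_def.mp (hφmono φ hφ (he_mono hmn))).1
  have hrbdd : ∀ φ : A →L[ℂ] ℂ, φ ∈ K → ∀ n, (φ (e n)).re ≤ 1 := by
    intro φ hφ n
    calc (φ (e n)).re ≤ ‖φ (e n)‖ := Complex.re_le_norm _
      _ = ‖φ (e n)‖ := rfl
      _ ≤ ‖e n‖ := hφle φ hφ _
      _ ≤ 1 := he_norm n
  -- pointwise convergence to 1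
  have hlim : ∀ φ : A →L[ℂ] ℂ, φ ∈ K →
      Tendsto (fun n => (φ (e n)).re) atTop (nhds 1) := by
    intro φ hφ
    have hbd : BddAbove (Set.range fun n => (φ (e n)).re) := by
      refine ⟨1, ?_⟩
      rintro - ⟨n, rfl⟩
      exact hrbdd φ hφ n
    have htend := tendsto_atTop_ciSup (hrmono φ hφ) hbd
    set L := ⨆ n, (φ (e n)).re with hLd
    have hL1 : L ≤ 1 := ciSup_le (hrbdd φ hφ)
    have hL0 : 0 ≤ L := by
      refine le_trans ?_ (le_ciSup hbd 0)
      have h0 : (0:A) ≤ e 0 := he_pos 0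
      have := hφmono φ hφ h0
      rw [map_zero] at this
      exact (Complex.le_def.mp this).1
    -- e n * e n ≤ e n
    have hsqle : ∀ n, (φ (e n * e n)).re ≤ L := by
      intro n
      have h1 : (0:Unitization ℂ A) ≤ (e n : Unitization ℂ A) := (hIcc n).1
      have h2 : ((e n : Unitization ℂ A)) ≤ 1 := (hIcc n).2
      have hpow := CStarAlgebra.pow_antitone h1 h2 (one_le_two)
      have hmul : ((e n * e n : A) : Unitization ℂ A) ≤ ((e n : A) : Unitization ℂ A) := by
        have h3 : ((e n * e n : A) : Unitization ℂ A)
            = ((e n : A) : Unitization ℂ A) ^ 2 := by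
          rw [Unitization.inr_mul, sq]
        rw [h3]
        simpa using hpow
      have hsa2 : IsSelfAdjoint (e n * e n) := by
        rw [IsSelfAdjoint, star_mul, hsa n]
      have := (Unitization.inr_le_iff (e n * e n) (e n) hsa2
        (IsSelfAdjoint.of_nonneg (he_pos n))).mp hmul
      calc (φ (e n * e n)).re ≤ (φ (e n)).re := (Complex.le_def.mp (hφmono φ hφ this)).1
        _ ≤ L := le_ciSup hbd n
    have hkeyL := hkey φ hφ L hsqle
    -- ‖φ‖ ≤ sqrt L
    have hnorm : ‖φ‖ ≤ Real.sqrt L := by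
      refine φ.opNorm_le_bound (Real.sqrt_nonneg L) fun x => ?_
      have h1 : normSq (φ x) ≤ L * (‖x‖ * ‖x‖) := by
        refine le_trans (hkeyL x) (mul_le_mul_of_nonneg_left ?_ hL0)
        calc (φ (star x * x)).re ≤ ‖φ (star x * x)‖ := Complex.re_le_norm _
          _ = ‖φ (star x * x)‖ := rfl
          _ ≤ ‖star x * x‖ := hφle φ hφ _
          _ ≤ ‖star x‖ * ‖x‖ := norm_mul_le _ _
          _ = ‖x‖ * ‖x‖ := by rw [norm_star]
      have h2 : ‖φ x‖ = Real.sqrt (normSq (φ x)) := by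
        rw [show ‖φ x‖ = ‖φ x‖ from rfl, Complex.norm_def]
      rw [h2]
      calc Real.sqrt (normSq (φ x)) ≤ Real.sqrt (L * (‖x‖ * ‖x‖)) := Real.sqrt_le_sqrt h1
        _ = Real.sqrt L * Real.sqrt (‖x‖ * ‖x‖) := Real.sqrt_mul hL0 _
        _ = Real.sqrt L * ‖x‖ := by rw [Real.sqrt_mul_self (norm_nonneg x)]
    have h1L : 1 ≤ L := by
      rw [(hK_states hφ).2] at hnorm
      nlinarith [Real.sq_sqrt hL0, Real.sqrt_nonneg L]
    have : L = 1 := le_antisymm hL1 h1L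
    rwa [this] at htend
  -- Dini-type argument
  rcases isEmpty_or_nonempty K with hKe | hKne
  · have : (fun n => ⨆ φ : K, ‖stateExt (φ : A →L[ℂ] ℂ)
        ((1 - (e n : Unitization ℂ A)) ^ α)‖) = fun _ => 0 := by
      funext n
      exact Real.iSup_of_isEmpty _
    rw [this]
    exact tendsto_const_nhds
  · rw [Metric.tendsto_atTop]
    intro ε hε
    -- open cover of the compact image
    set V : ℕ → Set (A → ℂ) := fun m => {f | 1 - ε / 2 < (f (e m)).re} with hV
    have hVopen : ∀ m, IsOpen (V m) := by
      intro m
      exact isOpen_lt continuous_const (Complex.continuous_re.comp (continuous_apply (e m)))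
    have hcover : ((fun φ : A →L[ℂ] ℂ => (φ : A → ℂ)) '' K) ⊆ ⋃ m, V m := by
      rintro - ⟨φ, hφ, rfl⟩
      have := (hlim φ hφ).eventually (eventually_gt_nhds (show 1 - ε / 2 < 1 by linarith))
      obtain ⟨m, hm⟩ := this.exists
      exact Set.mem_iUnion.mpr ⟨m, hm⟩
    obtain ⟨t, ht⟩ := hK.elim_finite_subcover V hVopen hcover
    set N := t.sup id with hN
    refine ⟨N, fun n hn => ?_⟩
    have hbound : ∀ φ : A →L[ℂ] ℂ, φ ∈ K →
        ‖stateExt φ ((1 - (e n : Unitization ℂ A)) ^ α)‖ ≤ ε / 2 := by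
      intro φ hφ
      have hmem : (φ : A → ℂ) ∈ ⋃ m ∈ t, V m := ht ⟨φ, hφ, rfl⟩
      obtain ⟨m, hmt, hmV⟩ := Set.mem_iUnion₂.mp hmem
      have hmn : m ≤ n := le_trans (Finset.le_sup (f := id) hmt) hn
      have h1 : 1 - ε / 2 < (φ (e m)).re := hmV
      have h2 : (φ (e m)).re ≤ (φ (e n)).re := hrmono φ hφ hmn
      have := est n φ hφ
      linarith
    have hT0 : 0 ≤ ⨆ φ : K, ‖stateExt (φ : A →L[ℂ] ℂ)
        ((1 - (e n : Unitization ℂ A)) ^ α)‖ :=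
      Real.iSup_nonneg fun φ => norm_nonneg _
    have hTle : (⨆ φ : K, ‖stateExt (φ : A →L[ℂ] ℂ)
        ((1 - (e n : Unitization ℂ A)) ^ α)‖) ≤ ε / 2 :=
      ciSup_le fun φ => hbound φ φ.2
    rw [Real.dist_eq, sub_zero, _root_.abs_of_nonneg hT0]
    linarith


/-- Dini-type lemma: if `(e_n)` is an increasing commuting approximate unit of positive
elements of norm at most 1 in a separable C*-algebra `A`, and `K` is a weak* compact set
of states, then for every `α ≥ 1` one has `sup_{φ ∈ K} |φ((1 − e_n)^α)| → 0`, the power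
being computed in the unitization (equivalently in the enveloping von Neumann
algebra `A''`). -/
theorem dini_approximate_unit
    {A : Type*} [NonUnitalNormedRing A] [StarRing A] [CStarRing A]
    [NormedSpace ℂ A] [IsScalarTower ℂ A A] [SMulCommClass ℂ A A]
    [PartialOrder A] [StarOrderedRing A]
    [CompleteSpace A] [TopologicalSpace.SeparableSpace A]
    (e : ℕ → A)
    (he_pos : ∀ n, 0 ≤ e n)
    (he_mono : Monotone e)
    (he_comm : ∀ m n, e m * e n = e n * e m)
    (he_norm : ∀ n, ‖e n‖ ≤ 1)
    (he_left : ∀ a : A, Tendsto (fun n => ‖e n * a - a‖) atTop (nhds 0))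
    (he_right : ∀ a : A, Tendsto (fun n => ‖a * e n - a‖) atTop (nhds 0))
    (K : Set (A →L[ℂ] ℂ)) (hK_states : K ⊆ {φ | IsState φ})
    (hK : IsWeakStarCompact K) :
    ∀ α : ℕ, 1 ≤ α →
      Tendsto (fun n => ⨆ φ : K,
          ‖stateExt (φ : A →L[ℂ] ℂ) ((1 - (e n : Unitization ℂ A)) ^ α)‖)
        atTop (nhds 0) := by
  letI : StarModule ℂ A := starModule_of_approx_unit e he_pos he_right
  exact main_aux e he_pos he_mono he_norm he_left he_right K hK_states hK
end
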